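/- Let A be a finite-dimensional graded algebra which is the Ext algebra of the simples of a Ginzburg dg algebra, viewed as a dg algebra with zero differential, and let X_σ be a string dg module given by a walk k₀ —a₁— k₁ —…—a_p— k_p with shifts ρ_i defined by ρ₀ = 0 and ρ_i = ρ_{i-1} - ε(a_i)·deg(a_i), where ε(a_i) = ± records the direction of the arrow. Then the prescribed differential d on X = ⊕_i S_{k_i}[ρ_i] (whose only nonzero components are the maps π_{a_i} between consecutive summands) satisfies d² = 0, provided no two consecutive arrows a_i, a_{i+1} of the walk come from the same triangle. -/
import Mathlib


/-! Statement 15: the prescribed differential of a string dg module squares to zero. -/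

/-- The differential of the string module attached to a walk
`k₀ —a₁— k₁ — … —a_p— k_p`: the underlying module is `⊕ᵢ S_{kᵢ}[ρᵢ]`, modelled by the
product `∀ i, V i`, and the only nonzero components of `d` are the structure maps
`g i = π_{a_i}` between consecutive summands, in the direction recorded by
`ε i` (`true` = pointing forward). -/
def stringDiff {k : Type*} [Field k] {p : ℕ}
    (V : Fin (p + 1) → Type*) [∀ i, AddCommGroup (V i)] [∀ i, Module k (V i)]
    (ε : Fin p → Bool)
    (g : ∀ i : Fin p,
      V (if ε i then i.castSucc else i.succ) →ₗ[k] V (if ε i then i.succ else i.castSucc)) :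
    (∀ i, V i) → (∀ i, V i) :=
  fun x j =>
    ∑ i : Fin p,
      if h : (if ε i then i.succ else i.castSucc) = j then
        cast (congrArg V h) (g i (x (if ε i then i.castSucc else i.succ)))
      else 0

/-- Let `X_σ` be the string dg module of a walk
`k₀ —a₁— k₁ — … —a_p— k_p` over the Ext algebra of the simples of a Ginzburg dg algebra,
with shifts `ρ₀ = 0`, `ρᵢ = ρᵢ₋₁ - ε(aᵢ)·deg aᵢ`, and differential with components the
basis maps `π_{a_i}` (here the maps `g i`). If no two consecutive arrows of the walk come
from the same triangle — so that, by the multiplication rules of the Ext algebra, the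
composite of consecutive structure maps vanishes — then `d² = 0`. -/
theorem string_module_differential_squared_zero
    {k : Type*} [Field k] {p : ℕ}
    (V : Fin (p + 1) → Type*) [∀ i, AddCommGroup (V i)] [∀ i, Module k (V i)]
    (ε : Fin p → Bool) (deg : Fin p → ℤ) (ρ : Fin (p + 1) → ℤ)
    (hρ₀ : ∀ h : 0 < p + 1, ρ ⟨0, h⟩ = 0)
    (hρ : ∀ i : Fin p, ρ i.succ = ρ i.castSucc - (if ε i then 1 else -1) * deg i)
    (g : ∀ i : Fin p,
      V (if ε i then i.castSucc else i.succ) →ₗ[k] V (if ε i then i.succ else i.castSucc))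
    (Tri : Type) (tri : Fin p → Tri)
    -- no two consecutive arrows of the walk come from the same triangle:
    (hdiff : ∀ i j : Fin p, (j : ℕ) = (i : ℕ) + 1 → tri i ≠ tri j)
    -- Ext-algebra rule: products of arrows from different triangles vanish:
    (hmul : ∀ i j : Fin p, tri i ≠ tri j →
      ∀ (h : (if ε i then i.succ else i.castSucc) = (if ε j then j.castSucc else j.succ)),
      ∀ x, g j (cast (congrArg V h) (g i x)) = 0) :
    ∀ x : ∀ i, V i, stringDiff V ε g (stringDiff V ε g x) = 0 := by
  intro x
  funext j
  set y := stringDiff V ε g x with hy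
  have key : ∀ jj : Fin p,
      g jj (y (if ε jj then jj.castSucc else jj.succ)) = 0 := by
    intro jj
    rw [hy]
    show g jj (∑ i : Fin p,
      if h : (if ε i then i.succ else i.castSucc)
          = (if ε jj then jj.castSucc else jj.succ) then
        cast (congrArg V h) (g i (x (if ε i then i.castSucc else i.succ)))
      else 0) = 0
    rw [map_sum]
    apply Finset.sum_eq_zero
    intro i _
    by_cases h : (if ε i then i.succ else i.castSucc)
        = (if ε jj then jj.castSucc else jj.succ)
    · rw [dif_pos h]
      refine hmul i jj ?_ h _
      rcases Bool.eq_false_or_eq_true (ε i) with hi | hi <;>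
        rcases Bool.eq_false_or_eq_true (ε jj) with hj | hj <;>
          simp [hi, hj] at h
      · -- ε i = true, ε jj = true : i.succ = jj.castSucc
        have hv : (jj : ℕ) = (i : ℕ) + 1 := by
          have := congrArg Fin.val h; simpa using this.symm
        exact hdiff i jj hv
      · -- ε i = true, ε jj = false : i = jj
        subst h; rw [hi] at hj; exact absurd hj (by simp)
      · -- ε i = false, ε jj = true : i = jj
        subst h; rw [hi] at hj; exact absurd hj (by simp)
      · -- ε i = false, ε jj = false : i.castSucc = jj.succ
        have hv : (i : ℕ) = (jj : ℕ) + 1 := by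
          have := congrArg Fin.val h; simpa using this
        exact (hdiff jj i hv).symm
    · rw [dif_neg h, map_zero]
  show (∑ i : Fin p,
      if h : (if ε i then i.succ else i.castSucc) = j then
        cast (congrArg V h) (g i (y (if ε i then i.castSucc else i.succ)))
      else 0) = 0
  apply Finset.sum_eq_zero
  intro i _
  by_cases h : (if ε i then i.succ else i.castSucc) = j
  · rw [dif_pos h, key i]
    subst h
    simp
  · rw [dif_neg h]
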